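/- Let A = {3j : j ≥ 1} and let α ≈ 0.5437 be the real root of 1 - x - x^2 - x^3. Then for every n ≥ 1, the number of compositions of n with no part divisible by 3 (the Tribonacci-type count) equals the nearest integer to ((1+α)/(1+2α+3α^2)) · α^{-n}. -/

import Mathlib

/-!
The dominant root of `X³ - X² - X - 1` is `β = 1/α`; its other two roots `γ, γ̄` satisfy
`|γ|² = 1/β = α` and `γ + γ̄ = 1 - β = -(α + α²)`. The counts satisfy the Tribonacci recurrence,
and `K = (1 + α)/(1 + 2α + 3α²)` is exactly the constant for which the error `E n = c n - K βⁿ`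
has no component along `βⁿ`. Then `E` obeys the second-order recurrence with roots `γ, γ̄`, so the
Hermitian form `|E (n+1) - γ̄ E n|²` shrinks by the factor `α` at every step. Since it is positive
definite, a numerical estimate at the start gives `|E n| < 1/2` for all `n ≥ 1`.
-/

noncomputable def compCount (A : Set ℕ) (n : ℕ) : ℕ :=
  Nat.card {l : List ℕ // l.sum = n ∧ ∀ x ∈ l, 0 < x ∧ x ∈ A}

open Finset

abbrev RestrictedComposition (A : Set ℕ) (n : ℕ) : Type :=
  {l : List ℕ // l.sum = n ∧ ∀ x ∈ l, 0 < x ∧ x ∈ A}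

instance (A : Set ℕ) (n : ℕ) : Finite (RestrictedComposition A n) :=
  Finite.of_injective (fun l => (⟨l.1, fun hi => (l.2.2 _ hi).1, l.2.1⟩ : Composition n))
    fun _ _ h => Subtype.ext (congrArg Composition.blocks h)

theorem compCount_zero (A : Set ℕ) : compCount A 0 = 1 := by
  rw [compCount, Nat.card_eq_one_iff_exists]
  refine ⟨⟨[], rfl, by simp⟩, ?_⟩
  rintro ⟨_ | ⟨x, t⟩, hs, hl⟩
  · rfl
  · have := (hl x (by simp)).1
    simp at hs
    omega

def consPart (A : Set ℕ) (n : ℕ) :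
    (Σ a : Fin (n + 1), {_t : RestrictedComposition A (n - a) // (a : ℕ) + 1 ∈ A}) →
      RestrictedComposition A (n + 1)
  | ⟨a, t, ha⟩ => ⟨(a + 1) :: t.1, by simp [t.2.1]; omega, by simpa [ha] using t.2.2⟩

theorem consPart_bijective (A : Set ℕ) (n : ℕ) : Function.Bijective (consPart A n) := by
  constructor
  · rintro ⟨a, t, ha⟩ ⟨b, u, hb⟩ h
    simp only [consPart, Subtype.mk.injEq, List.cons.injEq, add_left_inj] at h
    obtain rfl : a = b := Fin.ext h.1
    obtain rfl : t = u := Subtype.ext h.2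
    rfl
  · rintro ⟨_ | ⟨x, t⟩, hs, hl⟩
    · simp at hs
    · simp only [List.sum_cons, List.mem_cons, forall_eq_or_imp] at hs hl
      have hx : x - 1 + 1 = x := Nat.sub_add_cancel hl.1.1
      refine ⟨⟨⟨x - 1, by omega⟩, ⟨t, by simp; omega, hl.2⟩, by simp [hx, hl.1.2]⟩, ?_⟩
      simp [consPart, hx]

theorem compCount_succ (A : Set ℕ) [DecidablePred (· ∈ A)] (n : ℕ) :
    compCount A (n + 1) = ∑ a ∈ range (n + 1), if a + 1 ∈ A then compCount A (n - a) else 0 := by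
  rw [compCount, ← Nat.card_eq_of_bijective _ (consPart_bijective A n), Nat.card_sigma,
    ← Fin.sum_univ_eq_sum_range]
  refine Fintype.sum_congr _ _ fun a => ?_
  split_ifs with ha
  · exact Nat.card_congr (Equiv.subtypeUnivEquiv fun _ => ha)
  · simp [ha]

def IsTribonacci {R : Type*} [Add R] (u : ℕ → R) : Prop :=
  ∀ n, u (n + 3) = u (n + 2) + u (n + 1) + u n

theorem IsTribonacci.natCast {R : Type*} [AddMonoidWithOne R] {u : ℕ → ℕ} (hu : IsTribonacci u) :
    IsTribonacci fun n => (u n : R) :=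
  fun n => by simp only [hu n, Nat.cast_add]

-- Shifting a first part by 3 preserves `¬ 3 ∣ ·`, so the sum for `n + 4` is the sum for `n + 1`
-- plus the terms of the first parts 1 and 2. The shift by one is needed: the empty composition
-- gives `compCount A 0 = 1`, which breaks the recurrence at `n = 3`.
theorem isTribonacci_compCount_succ :
    IsTribonacci fun n => compCount {x | 0 < x ∧ ¬ 3 ∣ x} (n + 1) := by
  intro n
  beta_reduce
  have h3 : ∀ a, a + 3 + 1 ∈ {x | 0 < x ∧ ¬ 3 ∣ x} ↔ a + 1 ∈ {x | 0 < x ∧ ¬ 3 ∣ x} := by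
    intro a
    simp only [Set.mem_ofPred_eq]
    omega
  rw [compCount_succ _ (n + 3), compCount_succ _ n]
  simp only [sum_range_succ' _ (n + 3), sum_range_succ' _ (n + 2), sum_range_succ' _ (n + 1), h3,
    show ∀ a, n + 3 - (a + 3) = n - a by omega]
  norm_num
  ring

theorem compCount_one_two_three :
    compCount {x | 0 < x ∧ ¬ 3 ∣ x} 1 = 1 ∧ compCount {x | 0 < x ∧ ¬ 3 ∣ x} 2 = 2 ∧
      compCount {x | 0 < x ∧ ¬ 3 ∣ x} 3 = 3 := by
  simp [compCount_succ, compCount_zero, sum_range_succ]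

section Algebra

variable {R : Type*} [CommRing R]

theorem isTribonacci_pow {x : R} (hx : x ^ 3 = x ^ 2 + x + 1) : IsTribonacci fun n => x ^ n :=
  fun n => by linear_combination x ^ n * hx

theorem IsTribonacci.sub_const_mul {u v : ℕ → R} (hu : IsTribonacci u) (hv : IsTribonacci v)
    (c : R) : IsTribonacci fun n => u n - c * v n :=
  fun n => by linear_combination hu n - c * hv n

-- `E (k+2) + (α + α²) E (k+1) + α E k` gets multiplied by `1 + α + α² = 1/α` at each step.
theorem IsTribonacci.defect_eq_zero {α : R} (hα : α + α ^ 2 + α ^ 3 = 1) {E : ℕ → R}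
    (hE : IsTribonacci E) (h : E 2 + (α + α ^ 2) * E 1 + α * E 0 = 0) (k : ℕ) :
    E (k + 2) + (α + α ^ 2) * E (k + 1) + α * E k = 0 := by
  induction k with
  | zero => exact h
  | succ k ih =>
    linear_combination hE k + (1 + α + α ^ 2) * ih - ((1 + α) * E (k + 1) + E k) * hα

/-- `|y - γ̄ x|²`, where `γ, γ̄` are the complex roots of `X³ - X² - X - 1` when `α` is its
inverse real root. -/
def tribForm (α x y : R) : R := α * x ^ 2 + (α + α ^ 2) * x * y + y ^ 2

theorem tribForm_step {α x y z : R} (h : z + (α + α ^ 2) * y + α * x = 0) :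
    tribForm α y z = α * tribForm α x y := by
  unfold tribForm
  linear_combination (z - α * x) * h

theorem tribForm_eq_pow_mul {α : R} {E : ℕ → R}
    (h : ∀ k, E (k + 2) + (α + α ^ 2) * E (k + 1) + α * E k = 0) (k : ℕ) :
    tribForm α (E k) (E (k + 1)) = α ^ k * tribForm α (E 0) (E 1) := by
  induction k with
  | zero => ring
  | succ k ih =>
    rw [tribForm_step (h k), ih]
    ring

end Algebra

theorem mul_sq_le_tribForm (α x y : ℝ) : (α - (α + α ^ 2) ^ 2 / 4) * x ^ 2 ≤ tribForm α x y := by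
  unfold tribForm
  nlinarith [sq_nonneg ((α + α ^ 2) / 2 * x + y)]

theorem mul_sq_le_tribForm_zero {α : ℝ} (hα0 : 0 ≤ α) (hα1 : α ≤ 1)
    (hm : 0 ≤ α - (α + α ^ 2) ^ 2 / 4) {E : ℕ → ℝ}
    (h : ∀ k, E (k + 2) + (α + α ^ 2) * E (k + 1) + α * E k = 0) (k : ℕ) :
    (α - (α + α ^ 2) ^ 2 / 4) * E k ^ 2 ≤ tribForm α (E 0) (E 1) :=
  calc (α - (α + α ^ 2) ^ 2 / 4) * E k ^ 2 ≤ tribForm α (E k) (E (k + 1)) :=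
        mul_sq_le_tribForm α _ _
    _ = α ^ k * tribForm α (E 0) (E 1) := tribForm_eq_pow_mul h k
    _ ≤ tribForm α (E 0) (E 1) :=
        mul_le_of_le_one_left (le_trans (by positivity) (mul_sq_le_tribForm α _ _))
          (pow_le_one₀ hα0 hα1)

section Numerics

variable {α : ℝ} (hα : 1 - α - α ^ 2 - α ^ 3 = 0)
include hα

theorem tribonacci_root_bounds : 0.5436 < α ∧ α < 0.5438 := by
  constructor <;> nlinarith [sq_nonneg (α + 1), sq_nonneg (α - 0.5437)]

variable {β C : ℝ} (hβ : β = 1 / α) (hC : C = (1 + α) / (1 + 2 * α + 3 * α ^ 2) * β)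
include hβ hC

theorem tribonacci_initial_defect :
    3 - C * β ^ 2 + (α + α ^ 2) * (2 - C * β) + α * (1 - C) = 0 := by
  have hα0 : 0 < α := by linarith [(tribonacci_root_bounds hα).1]
  subst hC hβ
  field_simp
  linear_combination (-(6 * α ^ 4 + 7 * α ^ 3 + 4 * α ^ 2 + 2 * α + 1)) * hα

theorem tribForm_initial_lt : tribForm α (1 - C) (2 - C * β) < 0.09 := by
  obtain ⟨hlo, hhi⟩ := tribonacci_root_bounds hα
  have hCb : 0.954 < C ∧ C < 0.9552 := by
    have hD : 0 < α * (1 + 2 * α + 3 * α ^ 2) := by positivity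
    rw [hC, hβ, div_mul_div_comm, mul_one, mul_comm, lt_div_iff₀ hD, div_lt_iff₀ hD]
    constructor <;> nlinarith
  have hβb : 1.8389 < β ∧ β < 1.8396 := by
    rw [hβ, lt_div_iff₀ (by positivity), div_lt_iff₀ (by positivity)]
    constructor <;> nlinarith
  have hE1 : 0.2428 < 2 - C * β ∧ 2 - C * β < 0.2457 := by
    constructor <;> nlinarith
  have hE00 : (1 - C) ^ 2 < 0.0022 := by nlinarith
  have hE01 : (1 - C) * (2 - C * β) < 0.0114 := by nlinarith
  have hα2 : α + α ^ 2 < 0.84 := by nlinarith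
  unfold tribForm
  nlinarith

end Numerics

theorem abs_sub_lt_half_of_isTribonacci {α : ℝ} (hα : 1 - α - α ^ 2 - α ^ 3 = 0) {w : ℕ → ℝ}
    (hw : IsTribonacci w) (h0 : w 0 = 1) (h1 : w 1 = 2) (h2 : w 2 = 3) (k : ℕ) :
    |w k - (1 + α) / (1 + 2 * α + 3 * α ^ 2) * (1 / α) ^ (k + 1)| < 1 / 2 := by
  obtain ⟨hlo, hhi⟩ := tribonacci_root_bounds hα
  set β := 1 / α with hβ
  set C := (1 + α) / (1 + 2 * α + 3 * α ^ 2) * β with hC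
  have hβ3 : β ^ 3 = β ^ 2 + β + 1 := by
    rw [hβ]
    field_simp
    linear_combination hα
  set E : ℕ → ℝ := fun n => w n - C * β ^ n with hE_def
  have hE : IsTribonacci E := hw.sub_const_mul (isTribonacci_pow hβ3) C
  have hdefect : E 2 + (α + α ^ 2) * E 1 + α * E 0 = 0 := by
    simpa only [hE_def, h0, h1, h2, pow_zero, pow_one, mul_one]
      using tribonacci_initial_defect hα hβ hC
  have hE01 : tribForm α (E 0) (E 1) < 0.09 := by
    simpa only [hE_def, h0, h1, pow_zero, pow_one, mul_one] using tribForm_initial_lt hα hβ hC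
  have hm : 0.36 < α - (α + α ^ 2) ^ 2 / 4 := by nlinarith
  have hbound : (α - (α + α ^ 2) ^ 2 / 4) * E k ^ 2 < 0.36 * (1 / 2) ^ 2 := by
    have := mul_sq_le_tribForm_zero (by positivity) (by linarith) (by linarith)
      (hE.defect_eq_zero (by linear_combination -hα) hdefect) k
    linarith
  have hEk : E k ^ 2 < (1 / 2) ^ 2 :=
    lt_of_mul_lt_mul_left ((mul_le_mul_of_nonneg_right hm.le (sq_nonneg _)).trans_lt hbound)
      (by norm_num)
  simpa only [hE_def, hC, pow_succ', mul_assoc] using abs_lt_of_sq_lt_sq hEk (by norm_num)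

theorem round_eq_of_abs_sub_lt_half {K : Type*} [Field K] [LinearOrder K] [IsStrictOrderedRing K]
    [FloorRing K] {x : K} {m : ℤ} (h : |x - m| < 1 / 2) : round x = m := by
  rw [round_eq_iff]
  constructor <;> linarith [abs_sub_lt_iff.mp h]

theorem tribonacci_nearest_integer_general (α : ℝ)
    (hα : 1 - α - α ^ 2 - α ^ 3 = 0) (n : ℕ) (hn : 1 ≤ n) :
    (compCount {x | 0 < x ∧ ¬ 3 ∣ x} n : ℤ) =
      round ((1 + α) / (1 + 2 * α + 3 * α ^ 2) * (1 / α) ^ n) := by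
  obtain ⟨k, rfl⟩ := Nat.exists_eq_add_of_le' hn
  obtain ⟨h1, h2, h3⟩ := compCount_one_two_three
  have hw : IsTribonacci fun n => (compCount {x | 0 < x ∧ ¬ 3 ∣ x} (n + 1) : ℝ) :=
    isTribonacci_compCount_succ.natCast
  refine (round_eq_of_abs_sub_lt_half ?_).symm
  have := abs_sub_lt_half_of_isTribonacci hα hw (by simp [h1]) (by simp [h2]) (by simp [h3]) k
  push_cast
  rwa [abs_sub_comm] at this

theorem tribonacci_nearest_integer (α : ℝ) (h0 : 0 < α) (h1 : α < 1)
    (hα : 1 - α - α ^ 2 - α ^ 3 = 0) (n : ℕ) (hn : 1 ≤ n) :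
    (compCount {x | 0 < x ∧ ¬ 3 ∣ x} n : ℤ) =
      round ((1 + α) / (1 + 2 * α + 3 * α ^ 2) * (1 / α) ^ n) :=
  tribonacci_nearest_integer_general α hα n hn
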